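/- arXiv:1311.4871 — 2 statements merged into one kernel-verified Lean document; each statement's English description precedes it below -/
import Mathlib

section
/- Let P and Q be orthogonal projections on a Hilbert space H. Then the powers (PQ)ⁿ converge in the strong operator topology as n → ∞ to the orthogonal projection P ∧ Q onto ran(P) ∩ ran(Q) (von Neumann's alternating projections theorem). -/
/-!
Put `A = P Q P`; it is self-adjoint with `A * A ≤ A`, and `(P Q)ⁿ⁺¹ = Aⁿ (P Q)`. The numbers
`cₖ = re ⟪Aᵏ x, x⟫` decrease, since they alternate between `‖Aʲ x‖²` and `re ⟪A Aʲ x, Aʲ x⟫` and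
`‖A y‖² ≤ re ⟪A y, y⟫ ≤ ‖y‖²`. As `‖Aᵐ x - Aⁿ x‖² = c₂ₘ - 2 cₘ₊ₙ + c₂ₙ ≤ c₂ₘ - c₂ₙ` for `m ≤ n`,
the orbit `Aⁿ x` is Cauchy. Let `K` be the fixed space of `A`: the limit of `Aⁿ y` for `y ⊥ K` is a
fixed point orthogonal to `K`, hence `0`, so `Aⁿ x` tends to the projection of `x` onto `K`.
Finally `K = ran P ∩ ran Q`, because `‖P Q P y‖ = ‖y‖` forces `‖P y‖ = ‖y‖` and `‖Q y‖ = ‖y‖`.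
-/

open Filter Topology RCLike
open scoped InnerProductSpace

section

variable {𝕜 E : Type*} [RCLike 𝕜] [NormedAddCommGroup E] [InnerProductSpace 𝕜 E] [CompleteSpace E]
  {T : E →L[𝕜] E}

theorem IsSelfAdjoint.inner_pow_apply_pow_apply (hT : IsSelfAdjoint T) (i j : ℕ) (x : E) :
    ⟪(T ^ i) x, (T ^ j) x⟫_𝕜 = ⟪(T ^ (i + j)) x, x⟫_𝕜 := by
  rw [add_comm, pow_add, mul_apply_eq_comp]
  exact ((hT.pow j).isSymmetric _ _).symm

theorem IsSelfAdjoint.norm_apply_sq_le_re_inner (hT : IsSelfAdjoint T) (hT2 : T * T ≤ T) (y : E) :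
    ‖T y‖ ^ 2 ≤ re ⟪T y, y⟫_𝕜 := by
  have h := ((ContinuousLinearMap.le_def _ _).1 hT2).re_inner_nonneg_left y
  have hsymm : ⟪T (T y), y⟫_𝕜 = ⟪T y, T y⟫_𝕜 := hT.isSymmetric _ _
  rwa [sub_apply, inner_sub_left, map_sub, mul_apply_eq_comp, hsymm, inner_self_eq_norm_sq,
    sub_nonneg] at h

theorem IsSelfAdjoint.re_inner_apply_le_norm_sq (hT : IsSelfAdjoint T) (hT2 : T * T ≤ T) (y : E) :
    re ⟪T y, y⟫_𝕜 ≤ ‖y‖ ^ 2 := by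
  have hsq := hT.norm_apply_sq_le_re_inner hT2 y
  have hcs := re_inner_le_norm (𝕜 := 𝕜) (T y) y
  have hle : ‖T y‖ ≤ ‖y‖ := by nlinarith [norm_nonneg (T y), norm_nonneg y]
  calc re ⟪T y, y⟫_𝕜 ≤ ‖T y‖ * ‖y‖ := hcs
    _ ≤ ‖y‖ * ‖y‖ := by gcongr
    _ = ‖y‖ ^ 2 := (sq _).symm

theorem IsSelfAdjoint.antitone_re_inner_pow_apply (hT : IsSelfAdjoint T) (hT2 : T * T ≤ T)
    (x : E) : Antitone fun k ↦ re ⟪(T ^ k) x, x⟫_𝕜 := by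
  refine antitone_nat_of_succ_le fun k ↦ ?_
  obtain ⟨n, rfl | rfl⟩ := Nat.even_or_odd' k
  · rw [show 2 * n + 1 = (n + 1) + n by ring, two_mul, ← hT.inner_pow_apply_pow_apply,
      ← hT.inner_pow_apply_pow_apply, pow_succ' T n, mul_apply_eq_comp, inner_self_eq_norm_sq]
    exact hT.re_inner_apply_le_norm_sq hT2 _
  · rw [show 2 * n + 1 + 1 = (n + 1) + (n + 1) by ring, show 2 * n + 1 = (n + 1) + n by ring,
      ← hT.inner_pow_apply_pow_apply, ← hT.inner_pow_apply_pow_apply, inner_self_eq_norm_sq,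
      pow_succ' T n, mul_apply_eq_comp]
    exact hT.norm_apply_sq_le_re_inner hT2 _

theorem IsSelfAdjoint.norm_pow_apply_sub_pow_apply_sq_le (hT : IsSelfAdjoint T)
    (hT2 : T * T ≤ T) {m n : ℕ} (hmn : m ≤ n) (x : E) :
    ‖(T ^ m) x - (T ^ n) x‖ ^ 2 ≤ re ⟪(T ^ (m + m)) x, x⟫_𝕜 - re ⟪(T ^ (n + n)) x, x⟫_𝕜 := by
  have hmid := hT.antitone_re_inner_pow_apply hT2 x (Nat.add_le_add_right hmn n)
  rw [@norm_sub_sq 𝕜, ← inner_self_eq_norm_sq (𝕜 := 𝕜), ← inner_self_eq_norm_sq (𝕜 := 𝕜),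
    hT.inner_pow_apply_pow_apply, hT.inner_pow_apply_pow_apply, hT.inner_pow_apply_pow_apply]
  linarith

theorem IsSelfAdjoint.cauchySeq_pow_apply (hT : IsSelfAdjoint T) (hT2 : T * T ≤ T) (x : E) :
    CauchySeq fun n ↦ (T ^ n) x := by
  set c : ℕ → ℝ := fun k ↦ re ⟪(T ^ k) x, x⟫_𝕜
  have hanti : Antitone c := hT.antitone_re_inner_pow_apply hT2 x
  have hnonneg : ∀ k, 0 ≤ c k := fun k ↦ calc
    0 ≤ ‖(T ^ k) x‖ ^ 2 := sq_nonneg _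
    _ = c (k + k) := by rw [← inner_self_eq_norm_sq (𝕜 := 𝕜), hT.inner_pow_apply_pow_apply]
    _ ≤ c k := hanti (Nat.le_add_right k k)
  have hc : CauchySeq c :=
    (tendsto_atTop_ciInf hanti ⟨0, Set.forall_mem_range.2 hnonneg⟩).cauchySeq
  refine Metric.cauchySeq_iff'.2 fun ε hε ↦ ?_
  obtain ⟨N, hN⟩ := Metric.cauchySeq_iff'.1 hc (ε ^ 2) (by positivity)
  refine ⟨N, fun n hn ↦ ?_⟩
  have hcN := hN (n + n) (by omega)
  rw [Real.dist_eq, abs_sub_comm, abs_of_nonneg (sub_nonneg.2 (hanti (by omega)))] at hcN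
  have hsq : dist ((T ^ n) x) ((T ^ N) x) ^ 2 < ε ^ 2 := by
    rw [dist_comm, dist_eq_norm]
    linarith [hT.norm_pow_apply_sub_pow_apply_sq_le hT2 hn x, hanti (Nat.le_add_right N N)]
  exact lt_of_pow_lt_pow_left₀ 2 hε.le hsq

theorem IsSelfAdjoint.pow_apply_mem_orthogonal (hT : IsSelfAdjoint T) {K : Submodule 𝕜 E}
    (hK : ∀ k ∈ K, T k = k) {y : E} (hy : y ∈ Kᗮ) (n : ℕ) : (T ^ n) y ∈ Kᗮ := by
  intro k hk
  have hsymm : ⟪(T ^ n) k, y⟫_𝕜 = ⟪k, (T ^ n) y⟫_𝕜 := (hT.pow n).isSymmetric _ _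
  rw [← hsymm, pow_apply_eq_iterate, Function.IsFixedPt.iterate (hK k hk) n]
  exact hy k hk

theorem IsSelfAdjoint.tendsto_pow_apply_starProjection (hT : IsSelfAdjoint T) (hT2 : T * T ≤ T)
    (K : Submodule 𝕜 E) [K.HasOrthogonalProjection] (hK : ∀ y, T y = y ↔ y ∈ K) (x : E) :
    Tendsto (fun n ↦ (T ^ n) x) atTop (𝓝 (K.starProjection x)) := by
  have hfix : ∀ n, (T ^ n) (K.starProjection x) = K.starProjection x := fun n ↦ by
    rw [pow_apply_eq_iterate]
    exact Function.IsFixedPt.iterate ((hK _).2 (K.starProjection_apply_mem x)) n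
  obtain ⟨z, hz⟩ :=
    cauchySeq_tendsto_of_complete (hT.cauchySeq_pow_apply hT2 (x - K.starProjection x))
  have hzK : z ∈ K := by
    refine (hK z).1 (isFixedPt_of_tendsto_iterate (x := x - K.starProjection x) ?_
      T.continuous.continuousAt)
    simpa only [pow_apply_eq_iterate] using hz
  have hzK' : z ∈ Kᗮ := K.isClosed_orthogonal.mem_of_tendsto hz <| Eventually.of_forall <|
    hT.pow_apply_mem_orthogonal (fun k hk ↦ (hK k).2 hk) (K.sub_starProjection_mem_orthogonal x)
  have hz0 : z = 0 := inner_self_eq_zero.1 (hzK' z hzK)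
  simpa only [map_sub, hfix, add_sub_cancel, hz0, add_zero] using hz.const_add (K.starProjection x)

end

theorem IsIdempotentElem.mul_pow_succ {M : Type*} [Monoid M] {p : M} (hp : IsIdempotentElem p)
    (q : M) (n : ℕ) : (p * q) ^ (n + 1) = (p * q * p) ^ n * (p * q) := by
  have h : SemiconjBy (p * q) (p * q) (p * q * p) := by
    rw [SemiconjBy, mul_assoc (p * q) p, ← mul_assoc p p, hp.eq]
  rw [pow_succ', (h.pow_right n).eq]

namespace Submodule

variable {𝕜 E : Type*} [RCLike 𝕜] [NormedAddCommGroup E] [InnerProductSpace 𝕜 E]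
  (U V : Submodule 𝕜 E) [U.HasOrthogonalProjection] [V.HasOrthogonalProjection]

theorem starProjection_apply_starProjection_apply (x : E) :
    U.starProjection (U.starProjection x) = U.starProjection x :=
  starProjection_eq_self_iff.2 (U.starProjection_apply_mem x)

theorem starProjection_conjugate_apply_eq_self_iff {y : E} :
    (U.starProjection * V.starProjection * U.starProjection) y = y ↔ y ∈ U ⊓ V := by
  simp only [mul_apply_eq_comp]
  constructor
  · intro hy
    have hUy : ‖U.starProjection y‖ = ‖y‖ := by
      refine le_antisymm (U.norm_starProjection_apply_le y) ?_
      calc ‖y‖ = ‖U.starProjection (V.starProjection (U.starProjection y))‖ := by rw [hy]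
        _ ≤ ‖V.starProjection (U.starProjection y)‖ := U.norm_starProjection_apply_le _
        _ ≤ ‖U.starProjection y‖ := V.norm_starProjection_apply_le _
    have hyU : y ∈ U := (U.mem_iff_norm_starProjection y).2 hUy
    have hVy : ‖V.starProjection y‖ = ‖y‖ := by
      refine le_antisymm (V.norm_starProjection_apply_le y) ?_
      calc ‖y‖ = ‖U.starProjection (V.starProjection (U.starProjection y))‖ := by rw [hy]
        _ ≤ ‖V.starProjection y‖ := by
          rw [starProjection_eq_self_iff.2 hyU]
          exact U.norm_starProjection_apply_le _
    exact ⟨hyU, (V.mem_iff_norm_starProjection y).2 hVy⟩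
  · rintro ⟨hyU, hyV⟩
    rw [starProjection_eq_self_iff.2 hyU, starProjection_eq_self_iff.2 hyV,
      starProjection_eq_self_iff.2 hyU]

variable [CompleteSpace E]

instance : (U ⊓ V).HasOrthogonalProjection :=
  have hU : IsClosed (U : Set E) := U.orthogonal_orthogonal ▸ Uᗮ.isClosed_orthogonal
  have hV : IsClosed (V : Set E) := V.orthogonal_orthogonal ▸ Vᗮ.isClosed_orthogonal
  have : CompleteSpace ↥(U ⊓ V) := (hU.inter hV).completeSpace_coe
  .ofCompleteSpace _

theorem isSelfAdjoint_starProjection_conjugate :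
    IsSelfAdjoint (U.starProjection * V.starProjection * U.starProjection) := by
  simpa [(isSelfAdjoint_starProjection U).star_eq] using
    (isSelfAdjoint_starProjection V).conjugate U.starProjection

theorem starProjection_conjugate_mul_self_le :
    U.starProjection * V.starProjection * U.starProjection *
        (U.starProjection * V.starProjection * U.starProjection) ≤
      U.starProjection * V.starProjection * U.starProjection := by
  have hdiff : U.starProjection * V.starProjection * U.starProjection -
        U.starProjection * V.starProjection * U.starProjection *
          (U.starProjection * V.starProjection * U.starProjection) =
      ContinuousLinearMap.adjoint (V.starProjection ∘L U.starProjection) ∘L Uᗮ.starProjection ∘L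
        (V.starProjection ∘L U.starProjection) := by
    ext y
    simp [starProjection_orthogonal, ContinuousLinearMap.adjoint_comp, mul_apply_eq_comp,
      (isSelfAdjoint_starProjection U).adjoint_eq, (isSelfAdjoint_starProjection V).adjoint_eq,
      starProjection_apply_starProjection_apply]
  rw [ContinuousLinearMap.le_def, hdiff]
  exact (ContinuousLinearMap.IsPositive.of_isStarProjection
    isStarProjection_starProjection).adjoint_conj _

theorem tendsto_starProjection_mul_pow_apply (x : E) :
    Tendsto (fun n ↦ ((U.starProjection * V.starProjection) ^ n) x) atTop
      (𝓝 ((U ⊓ V).starProjection x)) := by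
  have h := (isSelfAdjoint_starProjection_conjugate U V).tendsto_pow_apply_starProjection
    (starProjection_conjugate_mul_self_le U V) (U ⊓ V)
    (fun _ ↦ starProjection_conjugate_apply_eq_self_iff U V) (U.starProjection (V.starProjection x))
  have hinf : (U ⊓ V).starProjection (U.starProjection (V.starProjection x)) =
      (U ⊓ V).starProjection x := by
    rw [← ContinuousLinearMap.comp_apply, starProjection_comp_starProjection_of_le inf_le_left,
      ← ContinuousLinearMap.comp_apply, starProjection_comp_starProjection_of_le inf_le_right]
  rw [← tendsto_add_atTop_iff_nat 1]
  simpa only [U.isIdempotentElem_starProjection.mul_pow_succ, mul_apply_eq_comp, hinf] using h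

end Submodule

/-- Von Neumann's alternating projections theorem: for orthogonal projections `P`, `Q`
on a Hilbert space, the powers `(PQ)ⁿ` converge in the strong operator topology to the
orthogonal projection onto `ran(P) ∩ ran(Q)`. -/
theorem alternating_projections {H : Type*} [NormedAddCommGroup H]
    [InnerProductSpace ℂ H] [CompleteSpace H]
    (P Q : H →L[ℂ] H)
    (hPsa : IsSelfAdjoint P) (hPidem : P ∘L P = P)
    (hQsa : IsSelfAdjoint Q) (hQidem : Q ∘L Q = Q) :
    ∃ R : H →L[ℂ] H, IsSelfAdjoint R ∧ R ∘L R = R ∧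
      LinearMap.range (R : H →ₗ[ℂ] H) = LinearMap.range (P : H →ₗ[ℂ] H) ⊓ LinearMap.range (Q : H →ₗ[ℂ] H) ∧
      ∀ x : H, Tendsto (fun n : ℕ => ((P ∘L Q) ^ n) x) atTop (nhds (R x)) := by
  obtain ⟨U, _, rfl⟩ := isStarProjection_iff_eq_starProjection.1 ⟨hPidem, hPsa⟩
  obtain ⟨V, _, rfl⟩ := isStarProjection_iff_eq_starProjection.1 ⟨hQidem, hQsa⟩
  refine ⟨(U ⊓ V).starProjection, isSelfAdjoint_starProjection _,
    (U ⊓ V).isIdempotentElem_starProjection, ?_, U.tendsto_starProjection_mul_pow_apply V⟩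
  simp
end

section
/- Let M be a martingale (a family (M_t) of bounded operators with E_s M_t E_s = M_s E_s = E_s M_s for s ≤ t, where (E_t) is an increasing family of projections) converging strongly to M_∞. Let T be a discrete quantum stopping time with support {t_1 < ⋯ < t_n}, i.e., mutually orthogonal projections T_1, …, T_n summing to I with T_i commuting with E_{t_j} and E_{t_i} T_i = T_i E_{t_i}, and set E_T := Σ_i T_i E_{t_i}. Then Σ_{i,j} T_i E_{t_i} M_{t_i ∨ t_j} E_{t_j} T_j = E_T M_t E_T for all t ≥ t_n. -/
open Filter

/-! Write `v = t_i ∨ t_j ≤ u`. Since `E_{t_i} E_v = E_{t_i}` and `E_v E_{t_j} = E_{t_j}`, the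
martingale property `E_v M_u E_v = M_v E_v` lets `M_v` be replaced by `M_u` between `E_{t_i}` and
`E_{t_j}`; the commutation `E_{t_j} T_j = T_j E_{t_j}` then identifies each term of the double sum
with the corresponding term of the expanded product `E_T M_u E_T`. -/

theorem mul_mul_eq_of_compression_eq {R : Type*} [Semigroup R] {a b p m m' : R}
    (ha : a * p = a) (hb : p * b = b) (hm : p * m * p = m' * p) :
    a * m' * b = a * m * b :=
  calc a * m' * b = a * (m' * p * b) := by rw [mul_assoc m', hb, mul_assoc]
    _ = a * (p * m * p * b) := by rw [hm]
    _ = a * p * m * (p * b) := by simp only [mul_assoc]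
    _ = a * m * b := by rw [ha, hb]

theorem mul_mul_max_eq_of_martingale {R : Type*} [Monoid R] {E M : ℝ → R}
    (hEmin : ∀ r s, E r * E s = E (min r s))
    (hmg : ∀ s v, s ≤ v → E s * M v * E s = M s * E s)
    {r s u : ℝ} (hr : r ≤ u) (hs : s ≤ u) :
    E r * M (max r s) * E s = E r * M u * E s :=
  mul_mul_eq_of_compression_eq (p := E (max r s))
    (by rw [hEmin, min_eq_left (le_max_left r s)])
    (by rw [hEmin, min_eq_right (le_max_right r s)])
    (hmg _ _ (max_le hr hs))

theorem discrete_stopping_closed_martingale_general {H : Type*} [NormedAddCommGroup H]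
    [InnerProductSpace ℂ H] {n : ℕ}
    (E : ℝ → H →L[ℂ] H)
    (hEmin : ∀ r s : ℝ, E r ∘L E s = E (min r s))
    (M : ℝ → H →L[ℂ] H)
    (hmg : ∀ s t : ℝ, s ≤ t →
      E s ∘L M t ∘L E s = M s ∘L E s ∧ M s ∘L E s = E s ∘L M s)
    (t : Fin n → ℝ)
    (T : Fin n → H →L[ℂ] H)
    (hTE : ∀ i (r : ℝ), T i ∘L E r = E r ∘L T i)
    (u : ℝ) (hu : ∀ i, t i ≤ u) :
    ∑ i, ∑ j, T i ∘L E (t i) ∘L M (max (t i) (t j)) ∘L E (t j) ∘L T j =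
      (∑ i, T i ∘L E (t i)) ∘L M u ∘L (∑ j, T j ∘L E (t j)) := by
  simp only [← ContinuousLinearMap.mul_def, ← mul_assoc] at hEmin hmg hTE ⊢
  have hcompress (i j : Fin n) :
      E (t i) * M (max (t i) (t j)) * E (t j) = E (t i) * M u * E (t j) :=
    mul_mul_max_eq_of_martingale hEmin (fun s v hsv => (hmg s v hsv).1) (hu i) (hu j)
  rw [Finset.sum_mul, Finset.sum_mul_sum]
  refine Finset.sum_congr rfl fun i _ => Finset.sum_congr rfl fun j _ => ?_
  calc T i * E (t i) * M (max (t i) (t j)) * E (t j) * T j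
      = T i * (E (t i) * M (max (t i) (t j)) * E (t j)) * T j := by simp only [mul_assoc]
    _ = T i * (E (t i) * M u * E (t j)) * T j := by rw [hcompress]
    _ = T i * E (t i) * M u * (T j * E (t j)) := by rw [hTE j]; simp only [mul_assoc]

/-- Discrete vacuum-adapted stopping of a closed martingale: if `M` is a martingale
(w.r.t. an increasing family of projections `E_r` with `E_r E_s = E_{r∧s}`) converging
strongly to `M_∞`, and `T` is a discrete quantum stopping time with support
`{t_1 < ⋯ < t_n}` given by mutually orthogonal projections `T_i` summing to `I` and
commuting with every `E_r`, then, with `E_T := Σ_i T_i E_{t_i}`,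
`Σ_{i,j} T_i E_{t_i} M_{t_i ∨ t_j} E_{t_j} T_j = E_T M_u E_T` for every `u ≥ t_n`. -/
theorem discrete_stopping_closed_martingale {H : Type*} [NormedAddCommGroup H]
    [InnerProductSpace ℂ H] [CompleteSpace H] {n : ℕ} (hn : 1 ≤ n)
    (E : ℝ → H →L[ℂ] H)
    (hEsa : ∀ r, IsSelfAdjoint (E r)) (hEidem : ∀ r, E r ∘L E r = E r)
    (hEmin : ∀ r s : ℝ, E r ∘L E s = E (min r s))
    (M : ℝ → H →L[ℂ] H) (Minf : H →L[ℂ] H)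
    (hmg : ∀ s t : ℝ, s ≤ t →
      E s ∘L M t ∘L E s = M s ∘L E s ∧ M s ∘L E s = E s ∘L M s)
    (hMinf : ∀ x : H, Tendsto (fun t : ℝ => M t x) atTop (nhds (Minf x)))
    (t : Fin n → ℝ) (ht0 : ∀ i, 0 ≤ t i) (ht : StrictMono t)
    (T : Fin n → H →L[ℂ] H)
    (hTsa : ∀ i, IsSelfAdjoint (T i)) (hTidem : ∀ i, T i ∘L T i = T i)
    (hTorth : ∀ i j, i ≠ j → T i ∘L T j = 0)
    (hTsum : ∑ i, T i = 1)
    (hTE : ∀ i (r : ℝ), T i ∘L E r = E r ∘L T i)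
    (u : ℝ) (hu : ∀ i, t i ≤ u) :
    ∑ i, ∑ j, T i ∘L E (t i) ∘L M (max (t i) (t j)) ∘L E (t j) ∘L T j =
      (∑ i, T i ∘L E (t i)) ∘L M u ∘L (∑ j, T j ∘L E (t j)) :=
  discrete_stopping_closed_martingale_general E hEmin M hmg t T hTE u hu
end
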